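/- arXiv:2605.25217 — 4 statements merged into one kernel-verified Lean document; each statement's English description precedes it below -/
import Mathlib

section
/- Let Γ⁻ ⊆ ℝⁿ, let ρ₁, ρ₂ ∈ Γ⁻ and σ₁, σ₂ ≥ 0, and suppose that for i = 1, 2, φ(s; ρᵢ) ∉ Γ⁻ for every s ∈ (0, σᵢ]. If φ(σ₁; ρ₁) = φ(σ₂; ρ₂), then σ₁ = σ₂ and ρ₁ = ρ₂. (In particular the map Ψ⁻¹ : (σ, ρ) ↦ φ(σ; ρ) is injective on such pairs, so distinct characteristic curves do not intersect.) -/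
open Set

lemma flow_shift_eq {E : Type*} [NormedAddCommGroup E] [NormedSpace ℝ E]
    (a : E → E) (K : NNReal) (ha : LipschitzWith K a)
    (φ : ℝ → E → E)
    (hφ' : ∀ x s, HasDerivAt (fun s' => φ s' x) (a (φ s x)) s)
    (c : ℝ) (x y : E) (T : ℝ)
    (h : φ (c + T) x = φ T y) :
    ∀ t ∈ Icc 0 T, φ (c + t) x = φ t y := by
  have hf' : ∀ t : ℝ, HasDerivAt (fun t' => φ (c + t') x) (a (φ (c + t) x)) t := by
    intro t
    have := (hφ' x (c + t)).scomp t ((hasDerivAt_id t).const_add c)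
    simpa [Function.comp_def] using this
  intro t ht
  refine ODE_solution_unique_of_mem_Icc_left (v := fun _ z => a z) (s := fun _ => univ)
    (f := fun t' => φ (c + t') x) (g := fun t' => φ t' y)
    (fun _ _ => ha.lipschitzOnWith) ?_ ?_ (fun _ _ => trivial) ?_ ?_ (fun _ _ => trivial) h ht
  · exact fun t' _ => (hf' t').continuousAt.continuousWithinAt
  · exact fun t' _ => (hf' t').hasDerivWithinAt
  · exact fun t' _ => (hφ' y t').continuousAt.continuousWithinAt
  · exact fun t' _ => (hφ' y t').hasDerivWithinAt

lemma key_half {E : Type*} [NormedAddCommGroup E] [NormedSpace ℝ E]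
    (a : E → E) (K : NNReal) (ha : LipschitzWith K a)
    (φ : ℝ → E → E)
    (hφ0 : ∀ x, φ 0 x = x)
    (hφ' : ∀ x s, HasDerivAt (fun s' => φ s' x) (a (φ s x)) s)
    (Γminus : Set E)
    (ρ₁ ρ₂ : E) (hρ₂ : ρ₂ ∈ Γminus)
    (σ₁ σ₂ : ℝ) (hσ₂ : 0 ≤ σ₂) (hle : σ₂ ≤ σ₁)
    (hnot₁ : ∀ s ∈ Set.Ioc 0 σ₁, φ s ρ₁ ∉ Γminus)
    (heq : φ σ₁ ρ₁ = φ σ₂ ρ₂) :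
    σ₁ = σ₂ ∧ ρ₁ = ρ₂ := by
  have h0 : φ (σ₁ - σ₂ + 0) ρ₁ = φ 0 ρ₂ := by
    refine flow_shift_eq a K ha φ hφ' (σ₁ - σ₂) ρ₁ ρ₂ σ₂ ?_ 0 ⟨le_rfl, hσ₂⟩
    simpa using heq
  rw [add_zero, hφ0] at h0
  have hc : σ₁ - σ₂ = 0 := by
    by_contra hne
    have hpos : 0 < σ₁ - σ₂ := lt_of_le_of_ne (by linarith) (Ne.symm hne)
    exact hnot₁ (σ₁ - σ₂) ⟨hpos, by linarith⟩ (h0 ▸ hρ₂)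
  constructor
  · linarith
  · rw [hc, hφ0] at h0; exact h0

/-- (Injectivity of `Ψ⁻¹ : (σ, ρ) ↦ φ (σ; ρ)`; distinct characteristic
curves do not intersect.) If `ρ₁, ρ₂ ∈ Γ⁻`, `σ₁, σ₂ ≥ 0`, for `i = 1, 2` one has
`φ (s; ρᵢ) ∉ Γ⁻` for every `s ∈ (0, σᵢ]`, and `φ (σ₁; ρ₁) = φ (σ₂; ρ₂)`, then
`σ₁ = σ₂` and `ρ₁ = ρ₂`. -/
theorem characteristic_coordinates_injective
    (n : ℕ) (hn : 1 ≤ n)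
    (a : EuclideanSpace ℝ (Fin n) → EuclideanSpace ℝ (Fin n))
    (K : NNReal) (ha : LipschitzWith K a)
    (φ : ℝ → EuclideanSpace ℝ (Fin n) → EuclideanSpace ℝ (Fin n))
    (hφ0 : ∀ x, φ 0 x = x)
    (hφ' : ∀ x s, HasDerivAt (fun s' => φ s' x) (a (φ s x)) s)
    (Γminus : Set (EuclideanSpace ℝ (Fin n)))
    (ρ₁ ρ₂ : EuclideanSpace ℝ (Fin n)) (hρ₁ : ρ₁ ∈ Γminus) (hρ₂ : ρ₂ ∈ Γminus)
    (σ₁ σ₂ : ℝ) (hσ₁ : 0 ≤ σ₁) (hσ₂ : 0 ≤ σ₂)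
    (hnot₁ : ∀ s ∈ Set.Ioc 0 σ₁, φ s ρ₁ ∉ Γminus)
    (hnot₂ : ∀ s ∈ Set.Ioc 0 σ₂, φ s ρ₂ ∉ Γminus)
    (heq : φ σ₁ ρ₁ = φ σ₂ ρ₂) :
    σ₁ = σ₂ ∧ ρ₁ = ρ₂ := by
  rcases le_total σ₂ σ₁ with hle | hle
  · exact key_half a K ha φ hφ0 hφ' Γminus ρ₁ ρ₂ hρ₂ σ₁ σ₂ hσ₂ hle hnot₁ heq
  · obtain ⟨h1, h2⟩ := key_half a K ha φ hφ0 hφ' Γminus ρ₂ ρ₁ hρ₁ σ₂ σ₁ hσ₁ hle hnot₂ heq.symm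
    exact ⟨h1.symm, h2.symm⟩
end

section
/- (Theorem 1, forward direction, along one characteristic.) Fix ρ₀ ∈ ℝⁿ and T > 0, and let λ, g : ℝⁿ → ℝ and f : ℝⁿ × ℝⁿ → ℝ. Suppose v : ℝⁿ × (0,∞) → ℝ is differentiable and satisfies, for every σ ∈ (0, T) and every t > 0, writing x = φ(σ; ρ₀): ∂v/∂t(x,t) = a(x)·∇v(x,t) + λ(x) v(x,t) + g(x) v(ρ₀, t) + ∫_{−σ}^{0} f(x, φ(s;x)) v(φ(s;x), t) |a(φ(s;x))| ds. Then the transformed state u(σ,t) := v(φ(σ; ρ₀), t) satisfies, for every σ ∈ (0,T) and t > 0, the one-dimensional hyperbolic equation ∂u/∂t(σ,t) = ∂u/∂σ(σ,t) + λ̂(σ) u(σ,t) + ĝ(σ) u(0,t) + ∫₀^{σ} f̂(σ,σ') u(σ',t) dσ', where λ̂(σ) = λ(φ(σ;ρ₀)), ĝ(σ) = g(φ(σ;ρ₀)), and f̂(σ,σ') = f(φ(σ;ρ₀), φ(σ';ρ₀)) |a(φ(σ';ρ₀))|. -/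
open Set

/-- Flow (semigroup) property for the flow of a Lipschitz vector field. -/
lemma flow_add {n : ℕ}
    (a : EuclideanSpace ℝ (Fin n) → EuclideanSpace ℝ (Fin n))
    (K : NNReal) (ha : LipschitzWith K a)
    (φ : ℝ → EuclideanSpace ℝ (Fin n) → EuclideanSpace ℝ (Fin n))
    (hφ0 : ∀ x, φ 0 x = x)
    (hφ' : ∀ x s, HasDerivAt (fun s' => φ s' x) (a (φ s x)) s)
    (x : EuclideanSpace ℝ (Fin n)) (σ s : ℝ) :
    φ s (φ σ x) = φ (s + σ) x := by
  set f : ℝ → EuclideanSpace ℝ (Fin n) := fun τ => φ τ (φ σ x) with hf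
  set g : ℝ → EuclideanSpace ℝ (Fin n) := fun τ => φ (τ + σ) x with hg
  have key : EqOn f g (Ioo (-(|s| + 1)) (|s| + 1)) := by
    apply ODE_solution_unique_of_mem_Ioo (v := fun _ y => a y) (s := fun _ => univ)
      (fun _ _ => ha.lipschitzOnWith) (t₀ := 0)
    · constructor <;> [linarith [abs_nonneg s]; linarith [abs_nonneg s]]
    · intro t _
      exact ⟨hφ' (φ σ x) t, mem_univ _⟩
    · intro t _
      refine ⟨?_, mem_univ _⟩
      have h1 : HasDerivAt (fun τ : ℝ => τ + σ) 1 t := (hasDerivAt_id t).add_const σ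
      have := (hφ' x (t + σ)).scomp t h1
      rw [one_smul] at this
      exact this
    · simp [hf, hg, hφ0]
  have hs : s ∈ Ioo (-(|s| + 1)) (|s| + 1) := by
    constructor
    · linarith [neg_abs_le s]
    · linarith [le_abs_self s]
  exact key hs

/-- (Theorem 1, forward direction, along one characteristic.)
If the differentiable function `v` satisfies the multidimensional first-order
hyperbolic equation at every point `x = φ (σ; ρ₀)`, `σ ∈ (0, T)`, `t > 0`, then the
transformed state `u (σ, t) = v (φ (σ; ρ₀), t)` satisfies the corresponding
one-dimensional hyperbolic equation with coefficients
`λ̂ (σ) = λ (φ (σ; ρ₀))`, `ĝ (σ) = g (φ (σ; ρ₀))`,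
`f̂ (σ, σ') = f (φ (σ; ρ₀), φ (σ'; ρ₀)) |a (φ (σ'; ρ₀))|`. -/
theorem characteristic_reduction_forward
    (n : ℕ) (hn : 1 ≤ n)
    (a : EuclideanSpace ℝ (Fin n) → EuclideanSpace ℝ (Fin n))
    (K : NNReal) (ha : LipschitzWith K a)
    (φ : ℝ → EuclideanSpace ℝ (Fin n) → EuclideanSpace ℝ (Fin n))
    (hφ0 : ∀ x, φ 0 x = x)
    (hφ' : ∀ x s, HasDerivAt (fun s' => φ s' x) (a (φ s x)) s)
    (ρ₀ : EuclideanSpace ℝ (Fin n)) (T : ℝ) (hT : 0 < T)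
    (lam g : EuclideanSpace ℝ (Fin n) → ℝ)
    (f : EuclideanSpace ℝ (Fin n) → EuclideanSpace ℝ (Fin n) → ℝ)
    (v : EuclideanSpace ℝ (Fin n) → ℝ → ℝ)
    (hv : Differentiable ℝ (fun p : EuclideanSpace ℝ (Fin n) × ℝ => v p.1 p.2))
    (hpde : ∀ σ ∈ Set.Ioo (0:ℝ) T, ∀ t > (0:ℝ),
      deriv (fun τ => v (φ σ ρ₀) τ) t
        = (inner ℝ (a (φ σ ρ₀)) (gradient (fun y => v y t) (φ σ ρ₀)) : ℝ)
          + lam (φ σ ρ₀) * v (φ σ ρ₀) t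
          + g (φ σ ρ₀) * v ρ₀ t
          + ∫ s in (-σ)..(0:ℝ),
              f (φ σ ρ₀) (φ s (φ σ ρ₀)) * v (φ s (φ σ ρ₀)) t * ‖a (φ s (φ σ ρ₀))‖) :
    ∀ σ ∈ Set.Ioo (0:ℝ) T, ∀ t > (0:ℝ),
      deriv (fun τ => v (φ σ ρ₀) τ) t
        = deriv (fun s => v (φ s ρ₀) t) σ
          + lam (φ σ ρ₀) * v (φ σ ρ₀) t
          + g (φ σ ρ₀) * v ρ₀ t
          + ∫ σ' in (0:ℝ)..σ,
              f (φ σ ρ₀) (φ σ' ρ₀) * v (φ σ' ρ₀) t * ‖a (φ σ' ρ₀)‖ := by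
  intro σ hσ t ht
  -- spatial slice differentiability
  have hvx : Differentiable ℝ (fun y => v y t) := by
    intro y
    exact (hv (y, t)).comp y (by
      have hd : DifferentiableAt ℝ (fun y : EuclideanSpace ℝ (Fin n) => (y, t)) y :=
        (differentiable_id.prodMk (differentiable_const t)) y
      exact hd)
  -- chain rule: deriv of u in σ equals fderiv applied to a(φ σ ρ₀)
  have hchain : deriv (fun s => v (φ s ρ₀) t) σ
      = fderiv ℝ (fun y => v y t) (φ σ ρ₀) (a (φ σ ρ₀)) := by
    have h1 : HasFDerivAt (fun y => v y t) (fderiv ℝ (fun y => v y t) (φ σ ρ₀)) (φ σ ρ₀) :=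
      (hvx (φ σ ρ₀)).hasFDerivAt
    have h2 := h1.comp_hasDerivAt σ (hφ' ρ₀ σ)
    exact h2.deriv
  -- gradient vs fderiv
  have hgrad : (inner ℝ (a (φ σ ρ₀)) (gradient (fun y => v y t) (φ σ ρ₀)) : ℝ)
      = fderiv ℝ (fun y => v y t) (φ σ ρ₀) (a (φ σ ρ₀)) := by
    rw [real_inner_comm]
    unfold gradient
    rw [← InnerProductSpace.toDual_apply_apply,
      LinearIsometryEquiv.apply_symm_apply]
  -- integral change of variables
  have hint : (∫ s in (-σ)..(0:ℝ),
        f (φ σ ρ₀) (φ s (φ σ ρ₀)) * v (φ s (φ σ ρ₀)) t * ‖a (φ s (φ σ ρ₀))‖)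
      = ∫ σ' in (0:ℝ)..σ, f (φ σ ρ₀) (φ σ' ρ₀) * v (φ σ' ρ₀) t * ‖a (φ σ' ρ₀)‖ := by
    have hflow : ∀ s : ℝ, φ s (φ σ ρ₀) = φ (s + σ) ρ₀ :=
      fun s => flow_add a K ha φ hφ0 hφ' ρ₀ σ s
    calc (∫ s in (-σ)..(0:ℝ),
          f (φ σ ρ₀) (φ s (φ σ ρ₀)) * v (φ s (φ σ ρ₀)) t * ‖a (φ s (φ σ ρ₀))‖)
        = ∫ s in (-σ)..(0:ℝ),
            f (φ σ ρ₀) (φ (s + σ) ρ₀) * v (φ (s + σ) ρ₀) t * ‖a (φ (s + σ) ρ₀)‖ := by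
          simp only [hflow]
      _ = ∫ σ' in (-σ + σ)..((0:ℝ) + σ),
            f (φ σ ρ₀) (φ σ' ρ₀) * v (φ σ' ρ₀) t * ‖a (φ σ' ρ₀)‖ :=
          intervalIntegral.integral_comp_add_right
            (fun σ' => f (φ σ ρ₀) (φ σ' ρ₀) * v (φ σ' ρ₀) t * ‖a (φ σ' ρ₀)‖) σ
      _ = ∫ σ' in (0:ℝ)..σ, f (φ σ ρ₀) (φ σ' ρ₀) * v (φ σ' ρ₀) t * ‖a (φ σ' ρ₀)‖ := by
          norm_num
  rw [hpde σ hσ t ht, hgrad, hchain, hint]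
end

section
/- (Theorem 1, converse direction, along one characteristic.) Fix ρ₀ ∈ ℝⁿ and T > 0, and let λ, g : ℝⁿ → ℝ and f : ℝⁿ × ℝⁿ → ℝ. Suppose v : ℝⁿ × (0,∞) → ℝ is differentiable and that the function u(σ,t) := v(φ(σ; ρ₀), t) satisfies, for every σ ∈ (0,T) and t > 0, ∂u/∂t(σ,t) = ∂u/∂σ(σ,t) + λ̂(σ) u(σ,t) + ĝ(σ) u(0,t) + ∫₀^{σ} f̂(σ,σ') u(σ',t) dσ', where λ̂(σ) = λ(φ(σ;ρ₀)), ĝ(σ) = g(φ(σ;ρ₀)), and f̂(σ,σ') = f(φ(σ;ρ₀), φ(σ';ρ₀)) |a(φ(σ';ρ₀))|. Then for every σ ∈ (0,T) and t > 0, writing x = φ(σ;ρ₀), v satisfies the multidimensional equation ∂v/∂t(x,t) = a(x)·∇v(x,t) + λ(x) v(x,t) + g(x) v(ρ₀, t) + ∫_{−σ}^{0} f(x, φ(s;x)) v(φ(s;x), t) |a(φ(s;x))| ds. -/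
open Set

/-- Global uniqueness for a Lipschitz autonomous ODE: two global solutions agreeing
at `0` agree everywhere. -/
lemma ode_unique_global {E : Type*} [NormedAddCommGroup E] [NormedSpace ℝ E]
    (a : E → E) (K : NNReal) (ha : LipschitzWith K a)
    (F G : ℝ → E) (hF : ∀ t, HasDerivAt F (a (F t)) t)
    (hG : ∀ t, HasDerivAt G (a (G t)) t) (h0 : F 0 = G 0) : ∀ t, F t = G t := by
  intro t
  have ht : t ∈ Ioo (-(|t| + 1)) (|t| + 1) := by
    constructor <;> [nlinarith [abs_nonneg t, neg_abs_le t]; nlinarith [le_abs_self t]]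
  have h0' : (0:ℝ) ∈ Ioo (-(|t| + 1)) (|t| + 1) := by
    constructor <;> nlinarith [abs_nonneg t]
  exact ODE_solution_unique_of_mem_Ioo (v := fun _ => a) (s := fun _ => univ)
    (fun _ _ => ha.lipschitzOnWith) h0'
    (fun t' _ => ⟨hF t', trivial⟩) (fun t' _ => ⟨hG t', trivial⟩) h0 ht

/-- (Theorem 1, converse direction, along one characteristic.)
If the transformed state `u (σ, t) = v (φ (σ; ρ₀), t)` of a differentiable function
`v` satisfies the one-dimensional hyperbolic equation with coefficients
`λ̂ (σ) = λ (φ (σ; ρ₀))`, `ĝ (σ) = g (φ (σ; ρ₀))`,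
`f̂ (σ, σ') = f (φ (σ; ρ₀), φ (σ'; ρ₀)) |a (φ (σ'; ρ₀))|` for every `σ ∈ (0, T)` and
`t > 0`, then `v` satisfies the multidimensional first-order hyperbolic equation at
every point `x = φ (σ; ρ₀)`, `σ ∈ (0, T)`, `t > 0`. -/
theorem characteristic_reduction_converse
    (n : ℕ) (hn : 1 ≤ n)
    (a : EuclideanSpace ℝ (Fin n) → EuclideanSpace ℝ (Fin n))
    (K : NNReal) (ha : LipschitzWith K a)
    (φ : ℝ → EuclideanSpace ℝ (Fin n) → EuclideanSpace ℝ (Fin n))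
    (hφ0 : ∀ x, φ 0 x = x)
    (hφ' : ∀ x s, HasDerivAt (fun s' => φ s' x) (a (φ s x)) s)
    (ρ₀ : EuclideanSpace ℝ (Fin n)) (T : ℝ) (hT : 0 < T)
    (lam g : EuclideanSpace ℝ (Fin n) → ℝ)
    (f : EuclideanSpace ℝ (Fin n) → EuclideanSpace ℝ (Fin n) → ℝ)
    (v : EuclideanSpace ℝ (Fin n) → ℝ → ℝ)
    (hv : Differentiable ℝ (fun p : EuclideanSpace ℝ (Fin n) × ℝ => v p.1 p.2))
    (hu : ∀ σ ∈ Set.Ioo (0:ℝ) T, ∀ t > (0:ℝ),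
      deriv (fun τ => v (φ σ ρ₀) τ) t
        = deriv (fun s => v (φ s ρ₀) t) σ
          + lam (φ σ ρ₀) * v (φ σ ρ₀) t
          + g (φ σ ρ₀) * v ρ₀ t
          + ∫ σ' in (0:ℝ)..σ,
              f (φ σ ρ₀) (φ σ' ρ₀) * v (φ σ' ρ₀) t * ‖a (φ σ' ρ₀)‖) :
    ∀ σ ∈ Set.Ioo (0:ℝ) T, ∀ t > (0:ℝ),
      deriv (fun τ => v (φ σ ρ₀) τ) t
        = (inner ℝ (a (φ σ ρ₀)) (gradient (fun y => v y t) (φ σ ρ₀)) : ℝ)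
          + lam (φ σ ρ₀) * v (φ σ ρ₀) t
          + g (φ σ ρ₀) * v ρ₀ t
          + ∫ s in (-σ)..(0:ℝ),
              f (φ σ ρ₀) (φ s (φ σ ρ₀)) * v (φ s (φ σ ρ₀)) t * ‖a (φ s (φ σ ρ₀))‖ := by
  -- the flow property
  have flow : ∀ σ s : ℝ, φ s (φ σ ρ₀) = φ (s + σ) ρ₀ := by
    intro σ s
    refine ode_unique_global a K ha (fun s => φ s (φ σ ρ₀)) (fun s => φ (s + σ) ρ₀)
      (hφ' (φ σ ρ₀)) ?_ (by simp [hφ0]) s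
    intro s'
    have h1 : HasDerivAt (fun s' : ℝ => s' + σ) 1 s' := (hasDerivAt_id s').add_const σ
    have := (hφ' ρ₀ (s' + σ)).scomp s' h1
    simpa [Function.comp_def] using this
  intro σ hσ t ht
  have key := hu σ hσ t ht
  -- the spatial term via the chain rule
  have hvd : DifferentiableAt ℝ (fun y => v y t) (φ σ ρ₀) := by
    have : (fun y => v y t)
        = (fun p : EuclideanSpace ℝ (Fin n) × ℝ => v p.1 p.2) ∘ (fun y => (y, t)) := rfl
    rw [this]
    exact (hv _).comp _ (DifferentiableAt.prodMk (differentiableAt_id (𝕜 := ℝ)) (differentiableAt_const t))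
  have hgrad := hvd.hasGradientAt
  have hchain : HasDerivAt (fun s => v (φ s ρ₀) t)
      (inner ℝ (gradient (fun y => v y t) (φ σ ρ₀)) (a (φ σ ρ₀)) : ℝ) σ := by
    have hF := hgrad.hasFDerivAt.comp_hasDerivAt σ (hφ' ρ₀ σ)
    simpa [HasGradientAt, Function.comp_def] using hF
  have hderiv : deriv (fun s => v (φ s ρ₀) t) σ
      = (inner ℝ (a (φ σ ρ₀)) (gradient (fun y => v y t) (φ σ ρ₀)) : ℝ) := by
    rw [hchain.deriv, real_inner_comm]
  -- the integral term via the substitution `σ' = s + σ`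
  have hint : (∫ s in (-σ)..(0:ℝ),
        f (φ σ ρ₀) (φ s (φ σ ρ₀)) * v (φ s (φ σ ρ₀)) t * ‖a (φ s (φ σ ρ₀))‖)
      = ∫ σ' in (0:ℝ)..σ, f (φ σ ρ₀) (φ σ' ρ₀) * v (φ σ' ρ₀) t * ‖a (φ σ' ρ₀)‖ := by
    have : (∫ s in (-σ)..(0:ℝ),
          f (φ σ ρ₀) (φ s (φ σ ρ₀)) * v (φ s (φ σ ρ₀)) t * ‖a (φ s (φ σ ρ₀))‖)
        = ∫ s in (-σ)..(0:ℝ),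
          f (φ σ ρ₀) (φ (s + σ) ρ₀) * v (φ (s + σ) ρ₀) t * ‖a (φ (s + σ) ρ₀)‖ := by
      simp_rw [flow σ]
    rw [this, intervalIntegral.integral_comp_add_right
      (fun σ' => f (φ σ ρ₀) (φ σ' ρ₀) * v (φ σ' ρ₀) t * ‖a (φ σ' ρ₀)‖) σ]
    norm_num
  rw [key, hderiv, hint]
end

section
/- (Backstepping transformation maps the plant to the target system.) Let G : [0,1] → ℝ be continuous, F continuous on the triangle 𝒯 = {(σ̄, ȳ) ∈ [0,1]² : 0 ≤ ȳ ≤ σ̄ ≤ 1}, and let k : 𝒯 → ℝ be C¹ and satisfy the kernel equations ∂k/∂σ̄(σ̄,ȳ) + ∂k/∂ȳ(σ̄,ȳ) = ∫_{ȳ}^{σ̄} k(σ̄,ξ) F(ξ,ȳ) dξ − F(σ̄,ȳ) on 𝒯 and k(σ̄,0) = ∫₀^{σ̄} k(σ̄,ȳ) G(ȳ) dȳ − G(σ̄) for σ̄ ∈ [0,1]. Suppose w : [0,1] × [0,∞) → ℝ is continuous, C¹ on (0,1) × (0,∞), satisfies ∂w/∂t = ∂w/∂σ̄ + G(σ̄)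 w(0,t) + ∫₀^{σ̄} F(σ̄, ȳ) w(ȳ, t) dȳ on (0,1) × (0,∞), and the feedback boundary condition w(1,t) = ∫₀¹ k(1,ȳ) w(ȳ,t) dȳ for all t ≥ 0. Then the transformed state w̄(σ̄,t) := w(σ̄,t) − ∫₀^{σ̄} k(σ̄,ȳ) w(ȳ,t) dȳ satisfies the target system ∂w̄/∂t = ∂w̄/∂σ̄ on (0,1) × (0,∞) together with w̄(1,t) = 0 for all t ≥ 0. -/
open MeasureTheory Set intervalIntegral Filter Topology

open MeasureTheory Set intervalIntegral Filter Topology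

/-- Tietze extension for `ContinuousOn` on a closed set. -/
lemma contOn_exists_extension {X : Type*} [TopologicalSpace X] [NormalSpace X]
    {s : Set X} (hs : IsClosed s) {f : X → ℝ} (hf : ContinuousOn f s) :
    ∃ g : X → ℝ, Continuous g ∧ ∀ p ∈ s, g p = f p := by
  obtain ⟨g, hg⟩ := ContinuousMap.exists_restrict_eq (Y := ℝ) hs
    ⟨s.restrict f, hf.restrict⟩
  exact ⟨g, g.continuous, fun p hp => by
    have := congrFun (congrArg ContinuousMap.toFun hg) ⟨p, hp⟩
    exact this⟩
open MeasureTheory Set intervalIntegral Filter Topology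

lemma finiteIoc' (a b : ℝ) : IsFiniteMeasure (volume.restrict (Ioc a b)) := by
  constructor
  rw [Measure.restrict_apply_univ, Real.volume_Ioc]
  exact ENNReal.ofReal_lt_top

lemma ae_ne_pt (y : ℝ) : ∀ᵐ u : ℝ, u ≠ y := by
  refine MeasureTheory.ae_iff.mpr ?_
  simp only [ne_eq, not_not]
  simpa using Real.volume_singleton

lemma intervalIntegrable_of_bdd {f : ℝ → ℝ} {a b C : ℝ}
    (hm : AEStronglyMeasurable f (volume.restrict (Set.uIoc a b)))
    (hC : ∀ x ∈ Set.uIcc a b, ‖f x‖ ≤ C) : IntervalIntegrable f volume a b := by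
  rw [intervalIntegrable_iff]
  haveI : IsFiniteMeasure (volume.restrict (Set.uIoc a b)) := finiteIoc' _ _
  refine Integrable.mono' (integrable_const C) hm ?_
  filter_upwards [ae_restrict_mem measurableSet_uIoc] with x hx
  exact hC x (Set.uIoc_subset_uIcc hx)

/-- Fubini on a rectangle for bounded strongly measurable integrand, interval form. -/
lemma fubini_rect_bdd {f : ℝ → ℝ → ℝ} {a b c d : ℝ} (hab : a ≤ b) (hcd : c ≤ d)
    (hm : StronglyMeasurable (Function.uncurry f)) {C : ℝ}
    (hC : ∀ x ∈ Icc a b, ∀ y ∈ Icc c d, ‖f x y‖ ≤ C) :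
    (∫ x in a..b, ∫ y in c..d, f x y) = ∫ y in c..d, ∫ x in a..b, f x y := by
  haveI := finiteIoc' a b
  haveI := finiteIoc' c d
  have hint : Integrable (Function.uncurry f)
      ((volume.restrict (Ioc a b)).prod (volume.restrict (Ioc c d))) := by
    refine ⟨hm.aestronglyMeasurable, HasFiniteIntegral.of_bounded (C := C) ?_⟩
    rw [Measure.prod_restrict]
    filter_upwards [ae_restrict_mem (measurableSet_Ioc.prod measurableSet_Ioc)] with p hp
    exact hC p.1 ⟨hp.1.1.le, hp.1.2⟩ p.2 ⟨hp.2.1.le, hp.2.2⟩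
  rw [intervalIntegral.integral_of_le hab, intervalIntegral.integral_of_le hcd]
  calc (∫ x in Ioc a b, ∫ y in c..d, f x y)
      = ∫ x in Ioc a b, ∫ y in Ioc c d, f x y :=
        setIntegral_congr_fun measurableSet_Ioc fun x _ =>
          intervalIntegral.integral_of_le hcd
    _ = ∫ y in Ioc c d, ∫ x in Ioc a b, f x y := integral_integral_swap hint
    _ = ∫ y in Ioc c d, ∫ x in a..b, f x y :=
        setIntegral_congr_fun measurableSet_Ioc fun y _ =>
          (intervalIntegral.integral_of_le hab).symm

/-- Fubini on the triangle `0 ≤ y ≤ u ≤ σ` for jointly continuous integrands. -/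
lemma fubini_triangle {f : ℝ → ℝ → ℝ} (hf : Continuous (Function.uncurry f))
    {σ : ℝ} (hσ : 0 ≤ σ) :
    (∫ y in (0:ℝ)..σ, ∫ u in y..σ, f u y) = ∫ u in (0:ℝ)..σ, ∫ y in (0:ℝ)..u, f u y := by
  set g : ℝ × ℝ → ℝ := fun p => if p.2 ≤ p.1 then f p.1 p.2 else 0 with hg
  have hgm : StronglyMeasurable g := by
    have : g = Set.indicator {p : ℝ × ℝ | p.2 ≤ p.1} (Function.uncurry f) := by
      funext p
      simp [hg, Set.indicator_apply, Function.uncurry]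
    rw [this]
    exact hf.stronglyMeasurable.indicator
      (isClosed_le continuous_snd continuous_fst).measurableSet
  obtain ⟨C, hC⟩ := (isCompact_Icc.prod isCompact_Icc :
      IsCompact (Icc (0:ℝ) σ ×ˢ Icc (0:ℝ) σ)).exists_bound_of_continuousOn
      hf.continuousOn
  have hgC : ∀ u ∈ Icc (0:ℝ) σ, ∀ y ∈ Icc (0:ℝ) σ, ‖g (u, y)‖ ≤ max C 0 := by
    intro u hu y hy
    by_cases h : y ≤ u
    · simp only [hg, h, if_true]
      exact le_trans (hC (u, y) ⟨hu, hy⟩) (le_max_left _ _)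
    · simp [hg, h]
  have hsec1 : ∀ y, ∀ a ∈ Icc (0:ℝ) σ, ∀ b ∈ Icc (0:ℝ) σ, y ∈ Icc (0:ℝ) σ →
      IntervalIntegrable (fun u => g (u, y)) volume a b := by
    intro y a ha b hb hy
    refine intervalIntegrable_of_bdd (C := max C 0)
      (hgm.comp_measurable (measurable_id.prodMk measurable_const)).aestronglyMeasurable ?_
    intro x hx
    exact hgC x (Set.uIcc_subset_Icc ha hb hx) y hy
  have A1 : ∀ y ∈ Icc (0:ℝ) σ, (∫ u in y..σ, f u y) = ∫ u in (0:ℝ)..σ, g (u, y) := by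
    intro y hy
    have splt := intervalIntegral.integral_add_adjacent_intervals
      (hsec1 y 0 (Set.left_mem_Icc.2 hσ) y hy hy)
      (hsec1 y y hy σ (Set.right_mem_Icc.2 hσ) hy)
    have h0 : (∫ u in (0:ℝ)..y, g (u, y)) = 0 := by
      rw [intervalIntegral.integral_of_le hy.1]
      have hz : ∀ᵐ u : ℝ, u ∈ Ioc (0:ℝ) y → g (u, y) = 0 := by
        filter_upwards [ae_ne_pt y] with u hu hmem
        have hlt : ¬ (y ≤ u) := fun hle => hu (le_antisymm hmem.2 hle)
        simp [hg, hlt]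
      rw [MeasureTheory.setIntegral_congr_ae measurableSet_Ioc hz]
      simp
    have h2 : (∫ u in y..σ, g (u, y)) = ∫ u in y..σ, f u y := by
      refine intervalIntegral.integral_congr fun u hu => ?_
      rw [Set.uIcc_of_le hy.2] at hu
      simp [hg, hu.1]
    rw [← splt, h0, h2, zero_add]
  have A2 : ∀ u ∈ Icc (0:ℝ) σ, (∫ y in (0:ℝ)..u, f u y) = ∫ y in (0:ℝ)..σ, g (u, y) := by
    intro u hu
    have hsec2 : ∀ a ∈ Icc (0:ℝ) σ, ∀ b ∈ Icc (0:ℝ) σ,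
        IntervalIntegrable (fun y => g (u, y)) volume a b := by
      intro a ha b hb
      refine intervalIntegrable_of_bdd (C := max C 0)
        (hgm.comp_measurable (measurable_const.prodMk measurable_id)).aestronglyMeasurable ?_
      intro x hx
      exact hgC u hu x (Set.uIcc_subset_Icc ha hb hx)
    have splt := intervalIntegral.integral_add_adjacent_intervals
      (hsec2 0 (Set.left_mem_Icc.2 hσ) u hu)
      (hsec2 u hu σ (Set.right_mem_Icc.2 hσ))
    have h0 : (∫ y in u..σ, g (u, y)) = 0 := by
      rw [intervalIntegral.integral_of_le hu.2]
      rw [MeasureTheory.setIntegral_congr_fun measurableSet_Ioc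
        (fun y hy => by simp [hg, not_le.2 hy.1] : ∀ y ∈ Ioc u σ, g (u, y) = 0)]
      simp
    have h1 : (∫ y in (0:ℝ)..u, g (u, y)) = ∫ y in (0:ℝ)..u, f u y := by
      refine intervalIntegral.integral_congr fun y hy => ?_
      rw [Set.uIcc_of_le hu.1] at hy
      simp [hg, hy.2]
    rw [← splt, h0, h1, add_zero]
  calc (∫ y in (0:ℝ)..σ, ∫ u in y..σ, f u y)
      = ∫ y in (0:ℝ)..σ, ∫ u in (0:ℝ)..σ, g (u, y) := by
        refine intervalIntegral.integral_congr fun y hy => ?_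
        exact A1 y ((Set.uIcc_of_le hσ) ▸ hy)
    _ = ∫ u in (0:ℝ)..σ, ∫ y in (0:ℝ)..σ, g (u, y) := by
        refine fubini_rect_bdd hσ hσ ?_ (C := max C 0) ?_
        · exact hgm.comp_measurable measurable_swap
        · intro y hy u hu
          exact hgC u hu y hy
    _ = ∫ u in (0:ℝ)..σ, ∫ y in (0:ℝ)..u, f u y := by
        refine intervalIntegral.integral_congr fun u hu => ?_
        exact (A2 u ((Set.uIcc_of_le hσ) ▸ hu)).symm


/-- Fubini on a rectangle for jointly continuous integrands, `a ≤ b`, arbitrary `c, d`. -/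
lemma fubini_rect_cont {f : ℝ → ℝ → ℝ} (hf : Continuous (Function.uncurry f))
    {a b : ℝ} (hab : a ≤ b) (c d : ℝ) :
    (∫ x in a..b, ∫ y in c..d, f x y) = ∫ y in c..d, ∫ x in a..b, f x y := by
  have key : ∀ c d : ℝ, c ≤ d →
      (∫ x in a..b, ∫ y in c..d, f x y) = ∫ y in c..d, ∫ x in a..b, f x y := by
    intro c d hcd
    obtain ⟨C, hC⟩ := (isCompact_Icc.prod isCompact_Icc :
        IsCompact (Icc a b ×ˢ Icc c d)).exists_bound_of_continuousOn hf.continuousOn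
    exact fubini_rect_bdd hab hcd hf.stronglyMeasurable
      (C := C) fun x hx y hy => hC (x, y) ⟨hx, hy⟩
  rcases le_total c d with hcd | hdc
  · exact key c d hcd
  · calc (∫ x in a..b, ∫ y in c..d, f x y)
        = ∫ x in a..b, -∫ y in d..c, f x y :=
          intervalIntegral.integral_congr fun x _ => intervalIntegral.integral_symm d c
      _ = -∫ x in a..b, ∫ y in d..c, f x y := intervalIntegral.integral_neg
      _ = -∫ y in d..c, ∫ x in a..b, f x y := by rw [key d c hdc]
      _ = ∫ y in c..d, ∫ x in a..b, f x y := (intervalIntegral.integral_symm d c).symm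

/-- (Backstepping transformation maps the plant to the target system.)
Given a `C¹` kernel `k` solving the kernel equations on the triangle
`𝒯 = {(σ̄, ȳ) : 0 ≤ ȳ ≤ σ̄ ≤ 1}` and a solution `w` of the plant
`∂w/∂t = ∂w/∂σ̄ + G w(0,·) + ∫₀^σ̄ F w` with feedback boundary condition
`w(1,t) = ∫₀¹ k(1,ȳ) w(ȳ,t) dȳ`, the transformed state
`w̄(σ̄,t) = w(σ̄,t) - ∫₀^σ̄ k(σ̄,ȳ) w(ȳ,t) dȳ` satisfies the target system
`∂w̄/∂t = ∂w̄/∂σ̄` on `(0,1) × (0,∞)` together with `w̄(1,t) = 0` for all `t ≥ 0`. -/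
theorem backstepping_transformation_to_target
    (G : ℝ → ℝ) (F : ℝ → ℝ → ℝ)
    (hG : ContinuousOn G (Set.Icc 0 1))
    (hF : ContinuousOn (fun p : ℝ × ℝ => F p.1 p.2)
      {p : ℝ × ℝ | 0 ≤ p.2 ∧ p.2 ≤ p.1 ∧ p.1 ≤ 1})
    (k : ℝ → ℝ → ℝ)
    (hk_C1 : ContDiffOn ℝ 1 (fun p : ℝ × ℝ => k p.1 p.2)
      {p : ℝ × ℝ | 0 ≤ p.2 ∧ p.2 ≤ p.1 ∧ p.1 ≤ 1})
    (hk_pde : ∀ σbar ybar : ℝ, 0 ≤ ybar → ybar ≤ σbar → σbar ≤ 1 →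
      deriv (fun s => k s ybar) σbar + deriv (fun y => k σbar y) ybar
        = (∫ ξ in ybar..σbar, k σbar ξ * F ξ ybar) - F σbar ybar)
    (hk_bc : ∀ σbar ∈ Set.Icc (0:ℝ) 1,
      k σbar 0 = (∫ ybar in (0:ℝ)..σbar, k σbar ybar * G ybar) - G σbar)
    (w : ℝ → ℝ → ℝ)
    (hw_cont : ContinuousOn (fun p : ℝ × ℝ => w p.1 p.2) (Set.Icc 0 1 ×ˢ Set.Ici 0))
    (hw_C1 : ContDiffOn ℝ 1 (fun p : ℝ × ℝ => w p.1 p.2) (Set.Ioo 0 1 ×ˢ Set.Ioi 0))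
    (hw_pde : ∀ σbar ∈ Set.Ioo (0:ℝ) 1, ∀ t ∈ Set.Ioi (0:ℝ),
      deriv (fun τ => w σbar τ) t
        = deriv (fun s => w s t) σbar
          + G σbar * w 0 t
          + ∫ ybar in (0:ℝ)..σbar, F σbar ybar * w ybar t)
    (hw_bc : ∀ t ≥ (0:ℝ), w 1 t = ∫ ybar in (0:ℝ)..1, k 1 ybar * w ybar t)
    (wbar : ℝ → ℝ → ℝ)
    (hwbar : ∀ σbar t, wbar σbar t
      = w σbar t - ∫ ybar in (0:ℝ)..σbar, k σbar ybar * w ybar t) :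
    (∀ σbar ∈ Set.Ioo (0:ℝ) 1, ∀ t ∈ Set.Ioi (0:ℝ),
      deriv (fun τ => wbar σbar τ) t = deriv (fun s => wbar s t) σbar) ∧
    (∀ t ≥ (0:ℝ), wbar 1 t = 0) := by
  classical
  set T : Set (ℝ × ℝ) := {p : ℝ × ℝ | 0 ≤ p.2 ∧ p.2 ≤ p.1 ∧ p.1 ≤ 1} with hTdef
  set Ω : Set (ℝ × ℝ) := Set.Ioo 0 1 ×ˢ Set.Ioi 0 with hΩdef
  set O : Set (ℝ × ℝ) := {p : ℝ × ℝ | 0 < p.2 ∧ p.2 < p.1 ∧ p.1 < 1} with hOdef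
  have hO_open : IsOpen O := by
    have : O = {p : ℝ × ℝ | 0 < p.2} ∩ ({p : ℝ × ℝ | p.2 < p.1} ∩ {p : ℝ × ℝ | p.1 < 1}) := by
      ext p; simp [hOdef]
    rw [this]
    exact (isOpen_lt continuous_const continuous_snd).inter
      ((isOpen_lt continuous_snd continuous_fst).inter
        (isOpen_lt continuous_fst continuous_const))
  have hOT : O ⊆ T := fun p hp => ⟨hp.1.le, hp.2.1.le, hp.2.2.le⟩
  have hT_closed : IsClosed T := by
    have : T = {p : ℝ × ℝ | 0 ≤ p.2} ∩ ({p : ℝ × ℝ | p.2 ≤ p.1} ∩ {p : ℝ × ℝ | p.1 ≤ 1}) := by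
      ext p; simp [hTdef]
    rw [this]
    exact (isClosed_le continuous_const continuous_snd).inter
      ((isClosed_le continuous_snd continuous_fst).inter
        (isClosed_le continuous_fst continuous_const))
  have hT_conv : Convex ℝ T := by
    intro p hp q hq a b ha hb hab
    simp only [hTdef, Set.mem_setOf_eq, Prod.snd_add, Prod.fst_add, Prod.smul_snd,
      Prod.smul_fst, smul_eq_mul] at *
    refine ⟨add_nonneg (mul_nonneg ha hp.1) (mul_nonneg hb hq.1), ?_, ?_⟩
    · exact add_le_add (mul_le_mul_of_nonneg_left hp.2.1 ha)
        (mul_le_mul_of_nonneg_left hq.2.1 hb)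
    · calc a * p.1 + b * q.1 ≤ a * 1 + b * 1 :=
          add_le_add (mul_le_mul_of_nonneg_left hp.2.2 ha)
            (mul_le_mul_of_nonneg_left hq.2.2 hb)
        _ = 1 := by linarith
  have hO_int : O ⊆ interior T := interior_maximal hOT hO_open
  have hT_ud : UniqueDiffOn ℝ T := by
    refine uniqueDiffOn_convex hT_conv ⟨((1:ℝ)/2, (1:ℝ)/4), hO_int ?_⟩
    refine ⟨by norm_num, by norm_num, by norm_num⟩
  set K : ℝ × ℝ → ℝ := fun p => k p.1 p.2 with hKdef
  set W : ℝ × ℝ → ℝ := fun p => w p.1 p.2 with hWdef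
  have hKc : ContinuousOn K T := hk_C1.continuousOn
  set D : ℝ × ℝ → (ℝ × ℝ →L[ℝ] ℝ) := fderivWithin ℝ K T with hDdef
  have hDc : ContinuousOn D T := hk_C1.continuousOn_fderivWithin hT_ud (le_refl 1)
  have hP1c : ContinuousOn (fun p => D p (1, 0)) T :=
    (ContinuousLinearMap.apply ℝ ℝ ((1:ℝ), (0:ℝ))).continuous.comp_continuousOn hDc
  have hP2c : ContinuousOn (fun p => D p (0, 1)) T :=
    (ContinuousLinearMap.apply ℝ ℝ ((0:ℝ), (1:ℝ))).continuous.comp_continuousOn hDc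
  obtain ⟨P1, hP1C, hP1e⟩ := contOn_exists_extension hT_closed hP1c
  obtain ⟨P2, hP2C, hP2e⟩ := contOn_exists_extension hT_closed hP2c
  obtain ⟨Kt, hKtC, hKte⟩ := contOn_exists_extension hT_closed hKc
  obtain ⟨Ft, hFtC, hFte⟩ := contOn_exists_extension hT_closed hF
  have hdomW_closed : IsClosed (Set.Icc (0:ℝ) 1 ×ˢ Set.Ici (0:ℝ)) :=
    isClosed_Icc.prod isClosed_Ici
  obtain ⟨Wt, hWtC, hWte⟩ := contOn_exists_extension hdomW_closed hw_cont
  obtain ⟨Gt, hGtC, hGte⟩ := contOn_exists_extension isClosed_Icc hG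
  -- differentiability of k at interior points
  have hKF : ∀ p ∈ O, HasFDerivAt K (D p) p := by
    intro p hp
    have hT_nhds : T ∈ 𝓝 p := mem_nhds_iff.mpr ⟨O, hOT, hO_open, hp⟩
    have hda : DifferentiableAt ℝ K p :=
      ((hk_C1.differentiableOn one_ne_zero) p (hOT hp)).differentiableAt hT_nhds
    have he : D p = fderiv ℝ K p := hda.fderivWithin (hT_ud p (hOT hp))
    exact he ▸ hda.hasFDerivAt
  have hk1 : ∀ p ∈ O, HasDerivAt (fun u => k u p.2) (P1 p) p.1 := by
    intro p hp
    have h := (hKF p hp).comp_hasDerivAt p.1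
      (HasDerivAt.prodMk (hasDerivAt_id p.1) (hasDerivAt_const p.1 p.2))
    rw [hP1e p (hOT hp)]
    exact h
  have hk2 : ∀ p ∈ O, HasDerivAt (fun v => k p.1 v) (P2 p) p.2 := by
    intro p hp
    have h := (hKF p hp).comp_hasDerivAt p.2
      (HasDerivAt.prodMk (hasDerivAt_const p.2 p.1) (hasDerivAt_id p.2))
    rw [hP2e p (hOT hp)]
    exact h
  have hKt1 : ∀ p ∈ O, HasDerivAt (fun u => Kt (u, p.2)) (P1 p) p.1 := by
    intro p hp
    refine (hk1 p hp).congr_of_eventuallyEq ?_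
    have hc : ContinuousAt (fun u : ℝ => (u, p.2)) p.1 :=
      (continuous_id.prodMk continuous_const).continuousAt
    have hev : ∀ᶠ u in 𝓝 p.1, ((u : ℝ), p.2) ∈ O := by
      have := hc.preimage_mem_nhds (hO_open.mem_nhds (by simpa using hp))
      exact this
    filter_upwards [hev] with u hu
    exact hKte _ (hOT hu)
  have hKt2 : ∀ p ∈ O, HasDerivAt (fun v => Kt (p.1, v)) (P2 p) p.2 := by
    intro p hp
    refine (hk2 p hp).congr_of_eventuallyEq ?_
    have hc : ContinuousAt (fun v : ℝ => (p.1, v)) p.2 :=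
      (continuous_const.prodMk continuous_id).continuousAt
    have hev : ∀ᶠ v in 𝓝 p.2, ((p.1 : ℝ), v) ∈ O := by
      have := hc.preimage_mem_nhds (hO_open.mem_nhds (by simpa using hp))
      exact this
    filter_upwards [hev] with v hv
    exact hKte _ (hOT hv)
  -- kernel PDE in extended form
  have hpdeK : ∀ p ∈ O, P1 p + P2 p
      = (∫ ξ in p.2..p.1, Kt (p.1, ξ) * Ft (ξ, p.2)) - Ft (p.1, p.2) := by
    intro p hp
    have h := hk_pde p.1 p.2 hp.1.le hp.2.1.le hp.2.2.le
    rw [(hk1 p hp).deriv, (hk2 p hp).deriv] at h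
    have hint : (∫ ξ in p.2..p.1, k p.1 ξ * F ξ p.2)
        = ∫ ξ in p.2..p.1, Kt (p.1, ξ) * Ft (ξ, p.2) := by
      refine intervalIntegral.integral_congr fun ξ hξ => ?_
      rw [Set.uIcc_of_le hp.2.1.le] at hξ
      have h1 : ((p.1 : ℝ), ξ) ∈ T := ⟨le_trans hp.1.le hξ.1, hξ.2, hp.2.2.le⟩
      have h2 : ((ξ : ℝ), p.2) ∈ T := ⟨hp.1.le, hξ.1, le_trans hξ.2 hp.2.2.le⟩
      rw [hKte _ h1, hFte _ h2]
    have hF2 : Ft (p.1, p.2) = F p.1 p.2 := hFte _ (hOT hp)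
    rw [hint] at h
    rw [hF2]
    exact h
  -- w differentiability data
  have hΩ_open : IsOpen Ω := isOpen_Ioo.prod isOpen_Ioi
  set Q : ℝ × ℝ → (ℝ × ℝ →L[ℝ] ℝ) := fderiv ℝ W with hQdef
  have hQc : ContinuousOn Q Ω := hw_C1.continuousOn_fderiv_of_isOpen hΩ_open (le_refl 1)
  have hWF : ∀ p ∈ Ω, HasFDerivAt W (Q p) p := fun p hp =>
    ((hw_C1.contDiffAt (hΩ_open.mem_nhds hp)).differentiableAt one_ne_zero).hasFDerivAt
  set Q1 : ℝ × ℝ → ℝ := fun p => Q p (1, 0) with hQ1def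
  set Q2 : ℝ × ℝ → ℝ := fun p => Q p (0, 1) with hQ2def
  have hQ1c : ContinuousOn Q1 Ω :=
    (ContinuousLinearMap.apply ℝ ℝ ((1:ℝ), (0:ℝ))).continuous.comp_continuousOn hQc
  have hQ2c : ContinuousOn Q2 Ω :=
    (ContinuousLinearMap.apply ℝ ℝ ((0:ℝ), (1:ℝ))).continuous.comp_continuousOn hQc
  have hw1 : ∀ p ∈ Ω, HasDerivAt (fun u => w u p.2) (Q1 p) p.1 := by
    intro p hp
    have h := (hWF p hp).comp_hasDerivAt p.1
      (HasDerivAt.prodMk (hasDerivAt_id p.1) (hasDerivAt_const p.1 p.2))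
    exact h
  have hw2 : ∀ p ∈ Ω, HasDerivAt (fun v => w p.1 v) (Q2 p) p.2 := by
    intro p hp
    have h := (hWF p hp).comp_hasDerivAt p.2
      (HasDerivAt.prodMk (hasDerivAt_const p.2 p.1) (hasDerivAt_id p.2))
    exact h
  have hWsub : Ω ⊆ Set.Icc (0:ℝ) 1 ×ˢ Set.Ici (0:ℝ) := fun p hp =>
    ⟨⟨hp.1.1.le, hp.1.2.le⟩, Set.mem_Ici.mpr (Set.mem_Ioi.mp hp.2).le⟩
  -- transfer HasDerivAt in first variable to Wt
  have hWt1 : ∀ p ∈ Ω, HasDerivAt (fun u => Wt (u, p.2)) (Q1 p) p.1 := by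
    intro p hp
    refine (hw1 p hp).congr_of_eventuallyEq ?_
    have hc : ContinuousAt (fun u : ℝ => (u, p.2)) p.1 :=
      (continuous_id.prodMk continuous_const).continuousAt
    have hev : ∀ᶠ u in 𝓝 p.1, ((u : ℝ), p.2) ∈ Ω := by
      have := hc.preimage_mem_nhds (hΩ_open.mem_nhds (by simpa using hp))
      exact this
    filter_upwards [hev] with u hu
    exact hWte _ (hWsub hu)
  -- w PDE in extended form
  have hpdeW : ∀ p ∈ Ω, Q2 p = Q1 p + Gt p.1 * Wt (0, p.2)
      + ∫ y in (0:ℝ)..p.1, Ft (p.1, y) * Wt (y, p.2) := by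
    intro p hp
    have h := hw_pde p.1 hp.1 p.2 hp.2
    rw [(hw1 p hp).deriv, (hw2 p hp).deriv] at h
    have hint : (∫ y in (0:ℝ)..p.1, F p.1 y * w y p.2)
        = ∫ y in (0:ℝ)..p.1, Ft (p.1, y) * Wt (y, p.2) := by
      refine intervalIntegral.integral_congr fun y hy => ?_
      rw [Set.uIcc_of_le hp.1.1.le] at hy
      have h1 : ((p.1 : ℝ), y) ∈ T := ⟨hy.1, hy.2, hp.1.2.le⟩
      have h2 : ((y : ℝ), p.2) ∈ Set.Icc (0:ℝ) 1 ×ˢ Set.Ici (0:ℝ) :=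
        ⟨⟨hy.1, le_trans hy.2 hp.1.2.le⟩, Set.mem_Ici.mpr (Set.mem_Ioi.mp hp.2).le⟩
      rw [hFte _ h1, hWte _ h2]
    have hG1 : G p.1 = Gt p.1 := (hGte p.1 ⟨hp.1.1.le, hp.1.2.le⟩).symm
    have hW0 : w 0 p.2 = Wt (0, p.2) :=
      (hWte ((0:ℝ), p.2) ⟨⟨le_refl 0, zero_le_one⟩, Set.mem_Ici.mpr (Set.mem_Ioi.mp hp.2).le⟩).symm
    rw [hint, hG1, hW0] at h
    exact h
  -- wbar in extended form
  have hwbar' : ∀ s ∈ Set.Icc (0:ℝ) 1, ∀ τ ∈ Set.Ici (0:ℝ),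
      wbar s τ = w s τ - ∫ y in (0:ℝ)..s, Kt (s, y) * Wt (y, τ) := by
    intro s hs τ hτ
    rw [hwbar s τ]
    congr 1
    refine intervalIntegral.integral_congr fun y hy => ?_
    rw [Set.uIcc_of_le hs.1] at hy
    have h1 : ((s : ℝ), y) ∈ T := ⟨hy.1, hy.2, hs.2⟩
    have h2 : ((y : ℝ), τ) ∈ Set.Icc (0:ℝ) 1 ×ˢ Set.Ici (0:ℝ) :=
      ⟨⟨hy.1, le_trans hy.2 hs.2⟩, hτ⟩
    rw [hKte _ h1, hWte _ h2]
  constructor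
  · -- main part
    intro σ hσ t ht
    have hσ0 : (0:ℝ) < σ := hσ.1
    have hσ1 : σ < 1 := hσ.2
    have ht0 : (0:ℝ) < t := ht
    have hΩmem : ((σ:ℝ), t) ∈ Ω := ⟨hσ, ht⟩
    set t₁ : ℝ := t / 2 with ht₁def
    have ht₁ : 0 < t₁ := by positivity
    have ht₁t : t₁ < t := by simp only [ht₁def]; linarith
    -- the inner double-kernel integral
    set inner2 : ℝ × ℝ → ℝ := fun q => ∫ ξ in (0:ℝ)..q.1, Ft (q.1, ξ) * Wt (ξ, q.2)
      with hinner2def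
    have hinner2C : Continuous inner2 := by
      refine intervalIntegral.continuous_parametric_intervalIntegral_of_continuous
        (a₀ := (0:ℝ)) ?_ continuous_fst
      exact (hFtC.comp (continuous_fst.fst.prodMk continuous_snd)).mul
        (hWtC.comp (continuous_snd.prodMk continuous_fst.snd))
    -- continuity of various parametric integrals
    have hP2WC : Continuous fun τ : ℝ => ∫ y in (0:ℝ)..σ, P2 (σ, y) * Wt (y, τ) := by
      refine intervalIntegral.continuous_parametric_intervalIntegral_of_continuous'
        (f := fun (τ : ℝ) (y : ℝ) => P2 (σ, y) * Wt (y, τ)) ?_ 0 σ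
      exact (hP2C.comp (continuous_const.prodMk continuous_snd)).mul
        (hWtC.comp (continuous_snd.prodMk continuous_fst))
    have hKinC : Continuous fun τ : ℝ => ∫ y in (0:ℝ)..σ, Kt (σ, y) * inner2 (y, τ) := by
      refine intervalIntegral.continuous_parametric_intervalIntegral_of_continuous'
        (f := fun (τ : ℝ) (y : ℝ) => Kt (σ, y) * inner2 (y, τ)) ?_ 0 σ
      exact (hKtC.comp (continuous_const.prodMk continuous_snd)).mul
        (hinner2C.comp (continuous_snd.prodMk continuous_fst))
    set g : ℝ → ℝ := fun τ =>
      Kt (σ, σ) * Wt (σ, τ) - Kt (σ, 0) * Wt (0, τ)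
        - (∫ y in (0:ℝ)..σ, P2 (σ, y) * Wt (y, τ))
        + (∫ y in (0:ℝ)..σ, Kt (σ, y) * Gt y) * Wt (0, τ)
        + ∫ y in (0:ℝ)..σ, Kt (σ, y) * inner2 (y, τ) with hgdef
    have hW0C : Continuous fun τ : ℝ => Wt (0, τ) :=
      hWtC.comp (continuous_const.prodMk continuous_id)
    have hWσC : Continuous fun τ : ℝ => Wt (σ, τ) :=
      hWtC.comp (continuous_const.prodMk continuous_id)
    have hgC : Continuous g := by
      exact ((((continuous_const.mul hWσC).sub (continuous_const.mul hW0C)).sub hP2WC).add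
        (continuous_const.mul hW0C)).add hKinC
    -- MAIN CLAIM (time direction)
    have ΨId : ∀ t₂ : ℝ, 0 < t₂ →
        (∫ y in (0:ℝ)..σ, Kt (σ, y) * Wt (y, t₂))
          - (∫ y in (0:ℝ)..σ, Kt (σ, y) * Wt (y, t₁))
          = ∫ τ in t₁..t₂, g τ := by
      intro t₂ ht₂
      set c0 : ℝ := ∫ τ in t₁..t₂, Wt (0, τ) with hc0def
      set V : ℝ → ℝ := fun y => ∫ τ in t₁..t₂, Wt (y, τ) with hVdef
      set RR : ℝ → ℝ := fun y => (Wt (y, t₂) - Wt (y, t₁)) - Gt y * c0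
          - ∫ τ in t₁..t₂, inner2 (y, τ) with hRRdef
      have hVC : Continuous V := by
        refine intervalIntegral.continuous_parametric_intervalIntegral_of_continuous'
          (f := fun (y : ℝ) (τ : ℝ) => Wt (y, τ)) ?_ t₁ t₂
        exact hWtC.comp (continuous_fst.prodMk continuous_snd)
      have hI2τC : Continuous fun y : ℝ => ∫ τ in t₁..t₂, inner2 (y, τ) := by
        refine intervalIntegral.continuous_parametric_intervalIntegral_of_continuous'
          (f := fun (y : ℝ) (τ : ℝ) => inner2 (y, τ)) ?_ t₁ t₂
        exact hinner2C.comp (continuous_fst.prodMk continuous_snd)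
      have hRRC : Continuous RR :=
        (((hWtC.comp (continuous_id.prodMk continuous_const)).sub
          (hWtC.comp (continuous_id.prodMk continuous_const))).sub
            (hGtC.mul continuous_const)).sub hI2τC
      have htmin : 0 < min t₁ t₂ := lt_min ht₁ ht₂
      have hmemΩ : ∀ y ∈ Set.Ioo (0:ℝ) 1, ∀ τ ∈ Set.uIcc t₁ t₂, ((y:ℝ), τ) ∈ Ω := by
        intro y hy τ hτ
        exact ⟨hy, lt_of_lt_of_le htmin hτ.1⟩
      -- derivative of V
      have hVderiv : ∀ y ∈ Set.Ioo (0:ℝ) σ, HasDerivAt V (RR y) y := by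
        intro y hy
        have hy01 : y ∈ Set.Ioo (0:ℝ) 1 := ⟨hy.1, lt_trans hy.2 hσ1⟩
        obtain ⟨ε, hε0, hεsub⟩ :=
          (Metric.nhds_basis_closedBall.mem_iff).mp (isOpen_Ioo.mem_nhds hy01)
        have hRect_sub : Metric.closedBall y ε ×ˢ Set.uIcc t₁ t₂ ⊆ Ω := by
          rintro ⟨x, τ⟩ ⟨hx, hτ⟩
          exact hmemΩ x (hεsub hx) τ hτ
        obtain ⟨C, hC⟩ := ((isCompact_closedBall y ε).prod
          isCompact_uIcc).exists_bound_of_continuousOn (hQ1c.mono hRect_sub)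
        have hmeas1 : ∀ᶠ x in 𝓝 y, AEStronglyMeasurable (fun τ => Wt ((x:ℝ), τ))
            (volume.restrict (Set.uIoc t₁ t₂)) :=
          Eventually.of_forall fun x =>
            ((hWtC.comp (continuous_const.prodMk continuous_id)).aestronglyMeasurable).restrict
        have hint1 : IntervalIntegrable (fun τ => Wt ((y:ℝ), τ)) volume t₁ t₂ :=
          (hWtC.comp (continuous_const.prodMk continuous_id)).intervalIntegrable _ _
        have hmeas2 : AEStronglyMeasurable (fun τ => Q1 ((y:ℝ), τ))
            (volume.restrict (Set.uIoc t₁ t₂)) := by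
          have hco : ContinuousOn (fun τ : ℝ => Q1 ((y:ℝ), τ)) (Set.uIoc t₁ t₂) := by
            refine hQ1c.comp ((continuous_const.prodMk continuous_id).continuousOn) ?_
            intro τ hτ
            exact hmemΩ y hy01 τ (Set.uIoc_subset_uIcc hτ)
          exact hco.aestronglyMeasurable measurableSet_uIoc
        have hbound : ∀ᵐ τ ∂(volume : Measure ℝ), τ ∈ Set.uIoc t₁ t₂ →
            ∀ x ∈ Metric.ball y ε, ‖Q1 ((x:ℝ), τ)‖ ≤ C := by
          refine ae_of_all _ fun τ hτ x hx => ?_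
          exact hC ((x:ℝ), τ) ⟨Metric.ball_subset_closedBall hx, Set.uIoc_subset_uIcc hτ⟩
        have hdiff : ∀ᵐ τ ∂(volume : Measure ℝ), τ ∈ Set.uIoc t₁ t₂ →
            ∀ x ∈ Metric.ball y ε, HasDerivAt (fun x' => Wt ((x':ℝ), τ)) (Q1 ((x:ℝ), τ)) x := by
          refine ae_of_all _ fun τ hτ x hx => ?_
          exact hWt1 ((x:ℝ), τ)
            (hmemΩ x (hεsub (Metric.ball_subset_closedBall hx)) τ (Set.uIoc_subset_uIcc hτ))
        obtain ⟨-, hVd⟩ := intervalIntegral.hasDerivAt_integral_of_dominated_loc_of_deriv_le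
          (F := fun x τ => Wt ((x:ℝ), τ)) (F' := fun x τ => Q1 ((x:ℝ), τ))
          (bound := fun _ => C) (Metric.ball_mem_nhds y hε0) hmeas1 hint1 hmeas2 hbound
          intervalIntegrable_const hdiff
        have hQint : (∫ τ in t₁..t₂, Q1 ((y:ℝ), τ)) = RR y := by
          have hmem' : ∀ τ ∈ Set.uIcc t₁ t₂, ((y:ℝ), τ) ∈ Ω := hmemΩ y hy01
          have hpt : ∀ τ ∈ Set.uIcc t₁ t₂,
              Q1 ((y:ℝ), τ) = Q2 ((y:ℝ), τ) - Gt y * Wt (0, τ) - inner2 (y, τ) := by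
            intro τ hτ
            have h' : Q2 ((y:ℝ), τ) = Q1 ((y:ℝ), τ) + Gt y * Wt (0, τ) + inner2 (y, τ) :=
              hpdeW ((y:ℝ), τ) (hmem' τ hτ)
            linarith
          rw [intervalIntegral.integral_congr hpt]
          have i1 : IntervalIntegrable (fun τ => Q2 ((y:ℝ), τ)) volume t₁ t₂ := by
            refine ContinuousOn.intervalIntegrable ?_
            refine hQ2c.comp ((continuous_const.prodMk continuous_id).continuousOn) ?_
            intro τ hτ
            exact hmem' τ hτ
          have i2 : IntervalIntegrable (fun τ => Gt y * Wt (0, τ)) volume t₁ t₂ :=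
            (continuous_const.mul hW0C).intervalIntegrable _ _
          have i3 : IntervalIntegrable (fun τ => inner2 (y, τ)) volume t₁ t₂ :=
            (hinner2C.comp (continuous_const.prodMk continuous_id)).intervalIntegrable _ _
          rw [intervalIntegral.integral_sub (i1.sub i2) i3,
            intervalIntegral.integral_sub i1 i2]
          have hFTC : (∫ τ in t₁..t₂, Q2 ((y:ℝ), τ)) = Wt (y, t₂) - Wt (y, t₁) := by
            have h := intervalIntegral.integral_eq_sub_of_hasDerivAt
              (f := fun τ => w y τ) (f' := fun τ => Q2 ((y:ℝ), τ))
              (fun τ hτ => hw2 ((y:ℝ), τ) (hmem' τ hτ)) i1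
            rw [h, hWte ((y:ℝ), t₂) ⟨⟨hy01.1.le, hy01.2.le⟩, ht₂.le⟩,
              hWte ((y:ℝ), t₁) ⟨⟨hy01.1.le, hy01.2.le⟩, ht₁.le⟩]
          have hGint : (∫ τ in t₁..t₂, Gt y * Wt (0, τ)) = Gt y * c0 :=
            intervalIntegral.integral_const_mul _ _
          rw [hFTC, hGint]
        rw [hQint] at hVd
        exact hVd
      -- integration by parts
      have hKtσC : Continuous fun y : ℝ => Kt (σ, y) :=
        hKtC.comp (continuous_const.prodMk continuous_id)
      have hP2σC : Continuous fun y : ℝ => P2 (σ, y) :=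
        hP2C.comp (continuous_const.prodMk continuous_id)
      have hIBP : (∫ y in (0:ℝ)..σ, (P2 ((σ:ℝ), y) * V y + Kt (σ, y) * RR y))
          = Kt (σ, σ) * V σ - Kt (σ, 0) * V 0 := by
        refine intervalIntegral.integral_eq_sub_of_hasDerivAt_of_le hσ0.le
          ((hKtσC.mul hVC).continuousOn) ?_
          (((hP2σC.mul hVC).add (hKtσC.mul hRRC)).intervalIntegrable _ _)
        intro y hy
        exact (hKt2 ((σ:ℝ), y) ⟨hy.1, hy.2, hσ1⟩).mul (hVderiv y hy)
      -- assemble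
      have hKW : ∀ τ : ℝ, Continuous fun y : ℝ => Kt (σ, y) * Wt (y, τ) := fun τ =>
        hKtσC.mul (hWtC.comp (continuous_id.prodMk continuous_const))
      have hsplitL : (∫ y in (0:ℝ)..σ, Kt (σ, y) * Wt (y, t₂))
          - (∫ y in (0:ℝ)..σ, Kt (σ, y) * Wt (y, t₁))
          = ∫ y in (0:ℝ)..σ, (Kt (σ, y) * RR y
              + ((Kt (σ, y) * Gt y) * c0 + Kt (σ, y) * (∫ τ in t₁..t₂, inner2 (y, τ)))) := by
        rw [← intervalIntegral.integral_sub ((hKW t₂).intervalIntegrable _ _)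
          ((hKW t₁).intervalIntegrable _ _)]
        refine intervalIntegral.integral_congr fun y _ => ?_
        simp only [hRRdef]
        ring
      have hsplitR : (∫ y in (0:ℝ)..σ, (Kt (σ, y) * RR y
            + ((Kt (σ, y) * Gt y) * c0 + Kt (σ, y) * (∫ τ in t₁..t₂, inner2 (y, τ)))))
          = (∫ y in (0:ℝ)..σ, Kt (σ, y) * RR y)
            + ((∫ y in (0:ℝ)..σ, (Kt (σ, y) * Gt y) * c0)
              + ∫ y in (0:ℝ)..σ, Kt (σ, y) * (∫ τ in t₁..t₂, inner2 (y, τ))) := by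
        have c1 : IntervalIntegrable (fun y => Kt (σ, y) * RR y) volume 0 σ := (hKtσC.mul hRRC).intervalIntegrable (μ := volume) 0 σ
        have c2 : IntervalIntegrable (fun y => Kt (σ, y) * Gt y * c0) volume 0 σ := ((hKtσC.mul hGtC).mul (continuous_const : Continuous fun _ : ℝ => c0)).intervalIntegrable (μ := volume) 0 σ
        have c3 : IntervalIntegrable (fun y => Kt (σ, y) * (∫ τ in t₁..t₂, inner2 (y, τ))) volume 0 σ := (hKtσC.mul hI2τC).intervalIntegrable (μ := volume) 0 σ
        rw [intervalIntegral.integral_add c1 (c2.add c3), intervalIntegral.integral_add c2 c3]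
      have hKtRR : (∫ y in (0:ℝ)..σ, Kt (σ, y) * RR y)
          = Kt (σ, σ) * V σ - Kt (σ, 0) * V 0
            - ∫ y in (0:ℝ)..σ, P2 ((σ:ℝ), y) * V y := by
        rw [intervalIntegral.integral_add (f := fun y => P2 ((σ:ℝ), y) * V y) (g := fun y => Kt (σ, y) * RR y) ((hP2σC.mul hVC).intervalIntegrable _ _)
          ((hKtσC.mul hRRC).intervalIntegrable _ _)] at hIBP
        linarith
      have hfub1 : (∫ y in (0:ℝ)..σ, P2 ((σ:ℝ), y) * V y)
          = ∫ τ in t₁..t₂, ∫ y in (0:ℝ)..σ, P2 (σ, y) * Wt (y, τ) := by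
        have h := fubini_rect_cont (f := fun y τ => P2 ((σ:ℝ), y) * Wt (y, τ))
          ((hP2C.comp (continuous_const.prodMk continuous_fst)).mul
            (hWtC.comp (continuous_fst.prodMk continuous_snd))) hσ0.le t₁ t₂
        rw [← h]
        refine intervalIntegral.integral_congr fun y _ => ?_
        exact (intervalIntegral.integral_const_mul _ _).symm
      have hfub2 : (∫ y in (0:ℝ)..σ, Kt (σ, y) * (∫ τ in t₁..t₂, inner2 (y, τ)))
          = ∫ τ in t₁..t₂, ∫ y in (0:ℝ)..σ, Kt (σ, y) * inner2 (y, τ) := by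
        have h := fubini_rect_cont (f := fun y τ => Kt ((σ:ℝ), y) * inner2 (y, τ))
          ((hKtC.comp (continuous_const.prodMk continuous_fst)).mul
            (hinner2C.comp (continuous_fst.prodMk continuous_snd))) hσ0.le t₁ t₂
        rw [← h]
        refine intervalIntegral.integral_congr fun y _ => ?_
        exact (intervalIntegral.integral_const_mul _ _).symm
      have hB : (∫ y in (0:ℝ)..σ, (Kt (σ, y) * Gt y) * c0)
          = ∫ τ in t₁..t₂, (∫ y in (0:ℝ)..σ, Kt (σ, y) * Gt y) * Wt (0, τ) := by
        rw [intervalIntegral.integral_mul_const]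
        exact (intervalIntegral.integral_const_mul _ _).symm
      have hA3 : Kt (σ, σ) * V σ = ∫ τ in t₁..t₂, Kt (σ, σ) * Wt (σ, τ) :=
        (intervalIntegral.integral_const_mul _ _).symm
      have hA4 : Kt (σ, 0) * V 0 = ∫ τ in t₁..t₂, Kt (σ, 0) * Wt (0, τ) :=
        (intervalIntegral.integral_const_mul _ _).symm
      have hgsplit : (∫ τ in t₁..t₂, g τ)
          = (∫ τ in t₁..t₂, Kt (σ, σ) * Wt (σ, τ))
            - (∫ τ in t₁..t₂, Kt (σ, 0) * Wt (0, τ))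
            - (∫ τ in t₁..t₂, ∫ y in (0:ℝ)..σ, P2 (σ, y) * Wt (y, τ))
            + (∫ τ in t₁..t₂, (∫ y in (0:ℝ)..σ, Kt (σ, y) * Gt y) * Wt (0, τ))
            + ∫ τ in t₁..t₂, ∫ y in (0:ℝ)..σ, Kt (σ, y) * inner2 (y, τ) := by
        have ia : IntervalIntegrable (fun τ => Kt (σ, σ) * Wt (σ, τ)) volume t₁ t₂ :=
          (continuous_const.mul hWσC).intervalIntegrable _ _
        have ib : IntervalIntegrable (fun τ => Kt (σ, 0) * Wt (0, τ)) volume t₁ t₂ :=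
          (continuous_const.mul hW0C).intervalIntegrable _ _
        have ic : IntervalIntegrable (fun τ => ∫ y in (0:ℝ)..σ, P2 (σ, y) * Wt (y, τ))
            volume t₁ t₂ := hP2WC.intervalIntegrable _ _
        have id' : IntervalIntegrable
            (fun τ => (∫ y in (0:ℝ)..σ, Kt (σ, y) * Gt y) * Wt (0, τ)) volume t₁ t₂ :=
          (continuous_const.mul hW0C).intervalIntegrable _ _
        have ie : IntervalIntegrable (fun τ => ∫ y in (0:ℝ)..σ, Kt (σ, y) * inner2 (y, τ))
            volume t₁ t₂ := hKinC.intervalIntegrable _ _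
        simp only [hgdef]
        rw [intervalIntegral.integral_add (((ia.sub ib).sub ic).add id') ie,
          intervalIntegral.integral_add ((ia.sub ib).sub ic) id',
          intervalIntegral.integral_sub (ia.sub ib) ic,
          intervalIntegral.integral_sub ia ib]
      rw [hsplitL, hsplitR, hKtRR, hA3, hA4, hfub1, hB, hfub2, hgsplit]
      ring
    -- derivative of the transform in time
    have hΨd : HasDerivAt (fun τ => ∫ y in (0:ℝ)..σ, Kt (σ, y) * Wt (y, τ)) (g t) t := by
      have hd0 : HasDerivAt (fun τ => ∫ τ' in t₁..τ, g τ') (g t) t :=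
        intervalIntegral.integral_hasDerivAt_right (hgC.intervalIntegrable _ _)
          (hgC.stronglyMeasurableAtFilter _ _) hgC.continuousAt
      have hd : HasDerivAt
          (fun τ => (∫ y in (0:ℝ)..σ, Kt (σ, y) * Wt (y, t₁)) + ∫ τ' in t₁..τ, g τ')
          (g t) t := hd0.const_add _
      refine hd.congr_of_eventuallyEq ?_
      filter_upwards [isOpen_Ioi.mem_nhds ht0] with τ hτ
      have := ΨId τ hτ
      linarith
    have hwbar_t : HasDerivAt (fun τ => wbar σ τ) (Q2 (σ, t) - g t) t := by
      have hd : HasDerivAt (fun τ => w σ τ - ∫ y in (0:ℝ)..σ, Kt (σ, y) * Wt (y, τ))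
          (Q2 (σ, t) - g t) t := (hw2 ((σ:ℝ), t) hΩmem).sub hΨd
      refine hd.congr_of_eventuallyEq ?_
      filter_upwards [isOpen_Ioi.mem_nhds ht0] with τ hτ
      exact hwbar' σ ⟨hσ0.le, hσ1.le⟩ τ (Set.mem_Ici.mpr (le_of_lt hτ))
    -- derivative of the transform in space
    set h1fun : ℝ → ℝ := fun u => ∫ y in (0:ℝ)..u, P1 (u, y) * Wt (y, t) with hh1def
    have hh1C : Continuous h1fun := by
      refine intervalIntegral.continuous_parametric_intervalIntegral_of_continuous
        (a₀ := (0:ℝ)) ?_ continuous_id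
      exact (hP1C.comp (continuous_fst.prodMk continuous_snd)).mul
        (hWtC.comp (continuous_snd.prodMk continuous_const))
    have hρC : Continuous fun y : ℝ => Kt (y, y) * Wt (y, t) :=
      (hKtC.comp (continuous_id.prodMk continuous_id)).mul
        (hWtC.comp (continuous_id.prodMk continuous_const))
    have ΨtId : ∀ s ∈ Set.Ioo (0:ℝ) 1,
        (∫ y in (0:ℝ)..s, Kt (s, y) * Wt (y, t))
          = (∫ y in (0:ℝ)..s, Kt (y, y) * Wt (y, t)) + ∫ u in (0:ℝ)..s, h1fun u := by
      intro s hs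
      have hptw : ∀ y ∈ Ioc (0:ℝ) s, Kt (s, y) * Wt (y, t)
          = Kt (y, y) * Wt (y, t) + (∫ u in y..s, P1 (u, y)) * Wt (y, t) := by
        intro y hy
        have hK : (∫ u in y..s, P1 (u, y)) = Kt (s, y) - Kt (y, y) := by
          refine intervalIntegral.integral_eq_sub_of_hasDerivAt_of_le hy.2
            ((hKtC.comp (continuous_id.prodMk continuous_const)).continuousOn) ?_
            ((hP1C.comp (continuous_id.prodMk continuous_const)).intervalIntegrable _ _)
          intro u hu
          exact hKt1 ((u:ℝ), y) ⟨hy.1, hu.1, lt_trans hu.2 hs.2⟩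
        rw [hK]; ring
      have h1 : (∫ y in (0:ℝ)..s, Kt (s, y) * Wt (y, t))
          = ∫ y in (0:ℝ)..s,
              (Kt (y, y) * Wt (y, t) + (∫ u in y..s, P1 (u, y)) * Wt (y, t)) := by
        rw [intervalIntegral.integral_of_le hs.1.le, intervalIntegral.integral_of_le hs.1.le]
        exact setIntegral_congr_fun measurableSet_Ioc hptw
      have haux : Continuous fun y : ℝ => (∫ u in y..s, P1 (u, y)) * Wt (y, t) := by
        have h2 : Continuous fun y : ℝ => ∫ u in s..y, P1 (u, y) := by
          refine intervalIntegral.continuous_parametric_intervalIntegral_of_continuous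
            (a₀ := s) ?_ continuous_id
          exact hP1C.comp (continuous_snd.prodMk continuous_fst)
        have h3 : Continuous fun y : ℝ => ∫ u in y..s, P1 (u, y) :=
          h2.neg.congr fun y => (intervalIntegral.integral_symm s y).symm
        exact h3.mul (hWtC.comp (continuous_id.prodMk continuous_const))
      rw [h1, intervalIntegral.integral_add (hρC.intervalIntegrable _ _)
        (haux.intervalIntegrable _ _)]
      congr 1
      have hfub := fubini_triangle (f := fun u y => P1 (u, y) * Wt (y, t))
        ((hP1C.comp (continuous_fst.prodMk continuous_snd)).mul
          (hWtC.comp (continuous_snd.prodMk continuous_const))) hs.1.le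
      calc (∫ y in (0:ℝ)..s, (∫ u in y..s, P1 (u, y)) * Wt (y, t))
          = ∫ y in (0:ℝ)..s, ∫ u in y..s, P1 (u, y) * Wt (y, t) := by
            refine intervalIntegral.integral_congr fun y _ => ?_
            exact (intervalIntegral.integral_mul_const _ _).symm
        _ = ∫ u in (0:ℝ)..s, ∫ y in (0:ℝ)..u, P1 (u, y) * Wt (y, t) := hfub
        _ = ∫ u in (0:ℝ)..s, h1fun u := rfl
    have hΨsd : HasDerivAt (fun s => ∫ y in (0:ℝ)..s, Kt (s, y) * Wt (y, t))
        (Kt (σ, σ) * Wt (σ, t) + h1fun σ) σ := by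
      have hd1 : HasDerivAt (fun s => ∫ y in (0:ℝ)..s, Kt (y, y) * Wt (y, t))
          (Kt (σ, σ) * Wt (σ, t)) σ :=
        intervalIntegral.integral_hasDerivAt_right (hρC.intervalIntegrable _ _)
          (hρC.stronglyMeasurableAtFilter _ _) hρC.continuousAt
      have hd2 : HasDerivAt (fun s => ∫ u in (0:ℝ)..s, h1fun u) (h1fun σ) σ :=
        intervalIntegral.integral_hasDerivAt_right (hh1C.intervalIntegrable _ _)
          (hh1C.stronglyMeasurableAtFilter _ _) hh1C.continuousAt
      refine (hd1.add hd2).congr_of_eventuallyEq ?_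
      filter_upwards [isOpen_Ioo.mem_nhds hσ] with s hs
      exact ΨtId s hs
    have hwbar_s : HasDerivAt (fun s => wbar s t)
        (Q1 (σ, t) - (Kt (σ, σ) * Wt (σ, t) + h1fun σ)) σ := by
      have hd : HasDerivAt (fun s => w s t - ∫ y in (0:ℝ)..s, Kt (s, y) * Wt (y, t))
          (Q1 (σ, t) - (Kt (σ, σ) * Wt (σ, t) + h1fun σ)) σ :=
        (hw1 ((σ:ℝ), t) hΩmem).sub hΨsd
      refine hd.congr_of_eventuallyEq ?_
      filter_upwards [isOpen_Ioo.mem_nhds hσ] with s hs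
      exact hwbar' s ⟨hs.1.le, hs.2.le⟩ t ht0.le
    -- the two derivatives agree
    have halg : Q2 (σ, t) - g t = Q1 (σ, t) - (Kt (σ, σ) * Wt (σ, t) + h1fun σ) := by
      have hpde : Q2 ((σ:ℝ), t) = Q1 ((σ:ℝ), t) + Gt σ * Wt (0, t)
          + ∫ y in (0:ℝ)..σ, Ft ((σ:ℝ), y) * Wt (y, t) := hpdeW ((σ:ℝ), t) hΩmem
      have hbc : Kt ((σ:ℝ), 0) = (∫ y in (0:ℝ)..σ, Kt ((σ:ℝ), y) * Gt y) - Gt σ := by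
        have h := hk_bc σ ⟨hσ0.le, hσ1.le⟩
        have h2 : (∫ y in (0:ℝ)..σ, k σ y * G y) = ∫ y in (0:ℝ)..σ, Kt ((σ:ℝ), y) * Gt y := by
          refine intervalIntegral.integral_congr fun y hy => ?_
          rw [Set.uIcc_of_le hσ0.le] at hy
          have e1 : Kt ((σ:ℝ), y) = k σ y := hKte ((σ:ℝ), y) ⟨hy.1, hy.2, hσ1.le⟩
          have e2 : Gt y = G y := hGte y ⟨hy.1, le_trans hy.2 hσ1.le⟩
          rw [e1, e2]
        have e0 : Kt ((σ:ℝ), 0) = k σ 0 := hKte ((σ:ℝ), 0) ⟨le_refl 0, hσ0.le, hσ1.le⟩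
        have eG : Gt σ = G σ := hGte σ ⟨hσ0.le, hσ1.le⟩
        rw [e0, h, ← h2, eG]
      have hcont2 : Continuous fun y : ℝ =>
          (∫ ξ in y..σ, Kt ((σ:ℝ), ξ) * Ft (ξ, y)) * Wt (y, t) := by
        have h2 : Continuous fun y : ℝ => ∫ ξ in σ..y, Kt ((σ:ℝ), ξ) * Ft (ξ, y) := by
          refine intervalIntegral.continuous_parametric_intervalIntegral_of_continuous
            (a₀ := σ) ?_ continuous_id
          exact (hKtC.comp (continuous_const.prodMk continuous_snd)).mul
            (hFtC.comp (continuous_snd.prodMk continuous_fst))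
        exact (h2.neg.congr fun y => (intervalIntegral.integral_symm σ y).symm).mul
          (hWtC.comp (continuous_id.prodMk continuous_const))
      have hcont3 : Continuous fun y : ℝ => Ft ((σ:ℝ), y) * Wt (y, t) :=
        (hFtC.comp (continuous_const.prodMk continuous_id)).mul
          (hWtC.comp (continuous_id.prodMk continuous_const))
      have hker : (∫ y in (0:ℝ)..σ, (P1 ((σ:ℝ), y) + P2 ((σ:ℝ), y)) * Wt (y, t))
          = (∫ y in (0:ℝ)..σ, (∫ ξ in y..σ, Kt ((σ:ℝ), ξ) * Ft (ξ, y)) * Wt (y, t))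
            - ∫ y in (0:ℝ)..σ, Ft ((σ:ℝ), y) * Wt (y, t) := by
        have hae : ∀ᵐ y : ℝ, y ∈ Ioc (0:ℝ) σ →
            (P1 ((σ:ℝ), y) + P2 ((σ:ℝ), y)) * Wt (y, t)
              = (∫ ξ in y..σ, Kt ((σ:ℝ), ξ) * Ft (ξ, y)) * Wt (y, t)
                - Ft ((σ:ℝ), y) * Wt (y, t) := by
          filter_upwards [ae_ne_pt σ] with y hyne hy
          have hyO : ((σ:ℝ), y) ∈ O := ⟨hy.1, lt_of_le_of_ne hy.2 hyne, hσ1⟩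
          have h : P1 ((σ:ℝ), y) + P2 ((σ:ℝ), y)
              = (∫ ξ in y..σ, Kt ((σ:ℝ), ξ) * Ft (ξ, y)) - Ft ((σ:ℝ), y) :=
            hpdeK ((σ:ℝ), y) hyO
          rw [h]
          ring
        rw [intervalIntegral.integral_of_le hσ0.le, intervalIntegral.integral_of_le hσ0.le,
          intervalIntegral.integral_of_le hσ0.le,
          ← MeasureTheory.integral_sub hcont2.integrableOn_Ioc hcont3.integrableOn_Ioc]
        exact MeasureTheory.setIntegral_congr_ae measurableSet_Ioc hae
      have hsplit : (∫ y in (0:ℝ)..σ, (P1 ((σ:ℝ), y) + P2 ((σ:ℝ), y)) * Wt (y, t))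
          = (∫ y in (0:ℝ)..σ, P1 ((σ:ℝ), y) * Wt (y, t))
            + ∫ y in (0:ℝ)..σ, P2 ((σ:ℝ), y) * Wt (y, t) := by
        have i1 : IntervalIntegrable (fun y => P1 ((σ:ℝ), y) * Wt (y, t)) volume 0 σ :=
          ((hP1C.comp (continuous_const.prodMk continuous_id)).mul
            (hWtC.comp (continuous_id.prodMk continuous_const))).intervalIntegrable _ _
        have i2 : IntervalIntegrable (fun y => P2 ((σ:ℝ), y) * Wt (y, t)) volume 0 σ :=
          ((hP2C.comp (continuous_const.prodMk continuous_id)).mul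
            (hWtC.comp (continuous_id.prodMk continuous_const))).intervalIntegrable _ _
        rw [← intervalIntegral.integral_add i1 i2]
        refine intervalIntegral.integral_congr fun y _ => ?_
        ring
      have hfub3 : (∫ y in (0:ℝ)..σ, (∫ ξ in y..σ, Kt ((σ:ℝ), ξ) * Ft (ξ, y)) * Wt (y, t))
          = ∫ y in (0:ℝ)..σ, Kt ((σ:ℝ), y) * inner2 (y, t) := by
        have h := fubini_triangle (f := fun u y => Kt ((σ:ℝ), u) * Ft (u, y) * Wt (y, t))
          (((hKtC.comp (continuous_const.prodMk continuous_fst)).mul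
            (hFtC.comp (continuous_fst.prodMk continuous_snd))).mul
            (hWtC.comp (continuous_snd.prodMk continuous_const))) hσ0.le
        calc (∫ y in (0:ℝ)..σ, (∫ ξ in y..σ, Kt ((σ:ℝ), ξ) * Ft (ξ, y)) * Wt (y, t))
            = ∫ y in (0:ℝ)..σ, ∫ u in y..σ, Kt ((σ:ℝ), u) * Ft (u, y) * Wt (y, t) := by
              refine intervalIntegral.integral_congr fun y _ => ?_
              exact (intervalIntegral.integral_mul_const _ _).symm
          _ = ∫ u in (0:ℝ)..σ, ∫ y in (0:ℝ)..u, Kt ((σ:ℝ), u) * Ft (u, y) * Wt (y, t) := h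
          _ = ∫ u in (0:ℝ)..σ, Kt ((σ:ℝ), u) * inner2 (u, t) := by
              refine intervalIntegral.integral_congr fun u _ => ?_
              simp only [hinner2def]
              rw [← intervalIntegral.integral_const_mul]
              refine intervalIntegral.integral_congr fun ξ _ => ?_
              ring
      have hgt : g t = Kt (σ, σ) * Wt (σ, t) - Kt (σ, 0) * Wt (0, t)
          - (∫ y in (0:ℝ)..σ, P2 ((σ:ℝ), y) * Wt (y, t))
          + (∫ y in (0:ℝ)..σ, Kt ((σ:ℝ), y) * Gt y) * Wt (0, t)
          + ∫ y in (0:ℝ)..σ, Kt ((σ:ℝ), y) * inner2 (y, t) := rfl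
      have hbc' : Kt ((σ:ℝ), 0) * Wt (0, t)
          = (∫ y in (0:ℝ)..σ, Kt ((σ:ℝ), y) * Gt y) * Wt (0, t) - Gt σ * Wt (0, t) := by
        rw [hbc]
        ring
      have hh1σ : h1fun σ = ∫ y in (0:ℝ)..σ, P1 ((σ:ℝ), y) * Wt (y, t) := rfl
      have hker' := hker
      rw [hfub3] at hker'
      rw [hgt, hpde, hh1σ]
      linarith [hsplit, hker', hbc']
    rw [hwbar_t.deriv, hwbar_s.deriv, halg]
  · intro t ht
    rw [hwbar 1 t, hw_bc t ht, sub_self]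
end
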